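/- arXiv:1507.06216 — 2 statements merged into one kernel-verified Lean document; each statement's English description precedes it below -/
import Mathlib

section
/- Let S ⊆ ℂ^m be open and w : S → ℝ upper semicontinuous such that for every s ∈ S and nonzero ξ ∈ ℂ^m there is a holomorphic disc f with f(0) = s, f'(0) = ξ and Λ(w ∘ f)(0) > 0. Let u ∈ C²(S) be such that for every s ∈ S there is a nonzero ξ ∈ ℂ^m with ∂∂̄u(s)(ξ, ξ̄) = 0. Then w − u has no local maximum in S. -/
/-!
Suppose `w - u` had a local maximum at `s`. Take a direction `ξ` in which the complex Hessian
of `u` at `s` vanishes and a disc `f` through `s` with `f'(0) = ξ` and `Λ(w ∘ f)(0) > 0`.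
Near `s`, `w ≤ u + (w - u)(s)`, so the circle means of `w ∘ f` are bounded by those of `u ∘ f`.
As `u` is `C²` and `f` agrees with the line `ℓ(z) = s + zξ` to second order, on the circle of
radius `r` the function `u ∘ f - u ∘ ℓ` is `du_s(f - ℓ) + O(r³)`, and `du_s(f - ℓ)` has mean
zero because `f - ℓ` is holomorphic and vanishes at `0`. Hence `Λ(w ∘ f)(0) ≤ Λ(u ∘ ℓ)(0) = 0`.
-/

open Filter MeasureTheory Set Metric

/-- The upper mean-value Laplacian of Lempert:
`Λu(z₀) = limsup_{r→0⁺} r⁻²(∫₀¹ u(z₀ + re^{2πiθ})dθ − u(z₀))`. -/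
noncomputable def lam (u : ℂ → ℝ) (z₀ : ℂ) : ℝ :=
  limsup (fun r : ℝ =>
      ((∫ θ in (0:ℝ)..(1:ℝ),
        u (z₀ + (r:ℂ) * Complex.exp (((2 * Real.pi * θ : ℝ) : ℂ) * Complex.I))) - u z₀) / r ^ 2)
    (nhdsWithin (0:ℝ) (Set.Ioi (0:ℝ)))

open Topology Asymptotics Real

lemma exists_frequently_mem_Ioc_of_limsup_pos {α : Type*} {l : Filter α} {φ : α → ℝ}
    (h : 0 < limsup φ l) : ∃ a b : ℝ, 0 < a ∧ ∃ᶠ x in l, φ x ∈ Ioc a b := by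
  -- a real `limsup` is `0` unless the function is bounded and cobounded above
  have hbdd : l.IsBoundedUnder (· ≤ ·) φ := by
    by_contra hb
    exact h.ne' (Real.limsup_of_not_isBoundedUnder hb)
  have hcobdd : l.IsCoboundedUnder (· ≤ ·) φ := by
    by_contra hb
    exact h.ne' (Real.limsup_of_not_isCoboundedUnder hb)
  obtain ⟨b, hb⟩ := hbdd.eventually_le
  refine ⟨limsup φ l / 2, b, half_pos h, ?_⟩
  exact (frequently_lt_of_lt_limsup hcobdd (half_lt_self h)).and_eventually hb

lemma eventually_div_sq_notMem_Ioc (k : ℝ) {a b : ℝ} (ha : 0 < a) :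
    ∀ᶠ r in 𝓝[>] (0:ℝ), k / r ^ 2 ∉ Ioc a b := by
  rcases le_or_gt k 0 with hk | hk
  · exact Eventually.of_forall fun r hr =>
      (div_nonpos_of_nonpos_of_nonneg hk (sq_nonneg r)).not_gt (ha.trans hr.1)
  · have : Tendsto (fun r : ℝ => k / r ^ 2) (𝓝[>] 0) atTop := by
      have hsq : Tendsto (fun r : ℝ => r ^ 2) (𝓝[>] 0) (𝓝[>] 0) :=
        tendsto_nhdsWithin_of_tendsto_nhds_of_eventually_within _
          ((continuous_pow 2).tendsto' 0 0 (by simp) |>.mono_left nhdsWithin_le_nhds)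
          (eventually_nhdsWithin_of_forall fun r hr => mem_Ioi.2 (pow_pos hr 2))
      simpa only [div_eq_mul_inv, Function.comp_def] using
        (tendsto_inv_nhdsGT_zero.comp hsq).const_mul_atTop hk
    exact (this.eventually_gt_atTop b).mono fun r hr hmem => hmem.2.not_gt hr

lemma isBigO_div_sq {X : ℝ → ℝ} {n : ℕ} (h : X =O[𝓝 0] fun r => r ^ (n + 2)) :
    (fun r => X r / r ^ 2) =O[𝓝[>] 0] fun r => r ^ n := by
  refine ((h.mono nhdsWithin_le_nhds).mul (isBigO_refl (fun r : ℝ => (r ^ 2)⁻¹) _)).congr'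
    (Eventually.of_forall fun r => (div_eq_mul_inv (X r) (r ^ 2)).symm) ?_
  filter_upwards [self_mem_nhdsWithin] with r (hr : 0 < r)
  field_simp
  ring

lemma eventually_continuousAt_comp {X Y Z : Type*} [TopologicalSpace X] [TopologicalSpace Y]
    [TopologicalSpace Z] {g : Y → Z} {f : X → Y} {x : X}
    (hg : ∀ᶠ y in 𝓝 (f x), ContinuousAt g y) (hf : ∀ᶠ x' in 𝓝 x, ContinuousAt f x') :
    ∀ᶠ x' in 𝓝 x, ContinuousAt (g ∘ f) x' := by
  filter_upwards [hf, Tendsto.eventually hf.self_of_nhds hg] with x' hfx hgx using hgx.comp hfx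

lemma eventually_forall_closedBall {P : ℂ → Prop} {c : ℂ} (h : ∀ᶠ z in 𝓝 c, P z) :
    ∀ᶠ r in 𝓝 (0:ℝ), ∀ z ∈ closedBall c |r|, P z := by
  obtain ⟨δ, hδ, hball⟩ := Metric.eventually_nhds_iff_ball.1 h
  filter_upwards [Metric.ball_mem_nhds 0 hδ] with r hr z hz
  exact hball z (closedBall_subset_ball (by simpa using hr) hz)

lemma eventually_circleIntegrable {G : Type*} [NormedAddCommGroup G] {g : ℂ → G} {c : ℂ}
    (h : ∀ᶠ z in 𝓝 c, ContinuousAt g z) :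
    ∀ᶠ r in 𝓝 (0:ℝ), CircleIntegrable g c r := by
  filter_upwards [eventually_forall_closedBall h] with r hr
  exact ContinuousOn.circleIntegrable' fun z hz =>
    (hr z (sphere_subset_closedBall hz)).continuousWithinAt

section

variable {E F : Type*} [NormedAddCommGroup E] [NormedSpace ℝ E]
  [NormedAddCommGroup F] [NormedSpace ℝ F]

lemma ContDiffAt.isBigO_sub_sub_fderiv {u : E → F} {p : E} (hu : ContDiffAt ℝ 2 u p) :
    (fun q : E × E => u q.2 - u q.1 - fderiv ℝ u p (q.2 - q.1)) =O[𝓝 (p, p)]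
      fun q => (‖q.1 - p‖ + ‖q.2 - p‖) * ‖q.2 - q.1‖ := by
  obtain ⟨K, t, ht, hlip⟩ := (hu.fderiv_right (m := 1) (by norm_num)).exists_lipschitzOnWith
  obtain ⟨ρ, hρ, hball⟩ := Metric.mem_nhds_iff.1 (inter_mem ht (hu.eventually (by simp)))
  refine IsBigO.of_bound K ?_
  rw [nhds_prod_eq]
  filter_upwards [prod_mem_prod (ball_mem_nhds p hρ) (ball_mem_nhds p hρ)]
    with ⟨x, y⟩ ⟨hx, hy⟩
  set R := ‖x - p‖ + ‖y - p‖
  -- mean value inequality on `ball p ρ ∩ closedBall p R`, where `‖du_z - du_p‖ ≤ K R`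
  have hsub : ball p ρ ∩ closedBall p R ⊆ t ∩ {z | ContDiffAt ℝ 2 u z} :=
    inter_subset_left.trans hball
  have hmem {z} (hz : z ∈ ball p ρ) (hzR : ‖z - p‖ ≤ R) :
      z ∈ ball p ρ ∩ closedBall p R :=
    ⟨hz, by rwa [mem_closedBall, dist_eq_norm]⟩
  have key :=
    ((convex_ball p ρ).inter (convex_closedBall p R)).norm_image_sub_le_of_norm_fderiv_le'
    (f := u) (φ := fderiv ℝ u p) (C := K * R)
    (fun z hz => (show ContDiffAt ℝ 2 u z from (hsub hz).2).differentiableAt two_ne_zero)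
    (fun z hz => by
      calc ‖fderiv ℝ u z - fderiv ℝ u p‖ ≤ K * ‖z - p‖ :=
            hlip.norm_sub_le (hsub hz).1 (hball (mem_ball_self hρ)).1
        _ ≤ K * R := by
            gcongr
            simpa [dist_eq_norm] using hz.2)
    (hmem hx (by simp [R])) (hmem hy (by simp [R]))
  rw [norm_mul, norm_norm, Real.norm_of_nonneg (by positivity), ← mul_assoc]
  exact key

lemma ContDiffAt.isBigO_sub_sub_fderiv_self {u : E → F} {p : E} (hu : ContDiffAt ℝ 2 u p) :
    (fun y => u y - u p - fderiv ℝ u p (y - p)) =O[𝓝 p] fun y => ‖y - p‖ ^ 2 := by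
  have hpair : Tendsto (fun y : E => (p, y)) (𝓝 p) (𝓝 (p, p)) :=
    (continuous_const.prodMk continuous_id).tendsto p
  simpa [Function.comp_def, sq] using hu.isBigO_sub_sub_fderiv.comp_tendsto hpair

end

section

variable {F : Type*} [NormedAddCommGroup F] [NormedSpace ℝ F]

lemma norm_circleAverage_le {g : ℂ → F} {c : ℂ} {R C : ℝ}
    (h : ∀ z ∈ sphere c |R|, ‖g z‖ ≤ C) : ‖circleAverage g c R‖ ≤ C := by
  have hC : ‖∫ θ in (0:ℝ)..2 * π, g (circleMap c R θ)‖ ≤ C * |2 * π - 0| :=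
    intervalIntegral.norm_integral_le_of_norm_le_const fun θ _ =>
      h _ (circleMap_mem_sphere' c R θ)
  rw [sub_zero, abs_of_pos two_pi_pos] at hC
  rw [circleAverage_def, norm_smul, norm_inv, Real.norm_of_nonneg two_pi_pos.le,
    inv_mul_le_iff₀ two_pi_pos]
  linarith

lemma isBigO_circleAverage {g : ℂ → F} {c : ℂ} {n : ℕ}
    (h : g =O[𝓝 c] fun z => ‖z - c‖ ^ n) :
    (fun r : ℝ => circleAverage g c r) =O[𝓝 0] fun r => r ^ n := by
  obtain ⟨C, hC⟩ := h.bound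
  refine IsBigO.of_bound C ?_
  filter_upwards [eventually_forall_closedBall hC] with r hr
  refine norm_circleAverage_le fun z hz => ?_
  have hzc : ‖z - c‖ = |r| := by rwa [mem_sphere, dist_eq_norm] at hz
  simpa [hzc] using hr z (sphere_subset_closedBall hz)

variable [CompleteSpace F]

lemma ContDiffAt.isBigO_circleAverage_sub {g : ℂ → F} {c : ℂ} (hg : ContDiffAt ℝ 2 g c) :
    (fun r : ℝ => circleAverage g c r - g c) =O[𝓝 0] fun r => r ^ 2 := by
  have hint : ∀ᶠ r in 𝓝 (0:ℝ), CircleIntegrable g c r :=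
    eventually_circleIntegrable <| (hg.eventually (by simp)).mono fun _ h => h.continuousAt
  have hsub (r : ℝ) : CircleIntegrable (fun z => z - c) c r :=
    (continuous_id.sub continuous_const).continuousOn.circleIntegrable'
  have hlinint (r : ℝ) : CircleIntegrable (fun z => fderiv ℝ g c (z - c)) c r :=
    ((fderiv ℝ g c).continuous.comp (continuous_id.sub continuous_const)).continuousOn
      |>.circleIntegrable'
  have hlin (r : ℝ) : circleAverage (fun z => fderiv ℝ g c (z - c)) c r = 0 := by
    rw [← Function.comp_def (fderiv ℝ g c), (fderiv ℝ g c).circleAverage_comp_comm (hsub r),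
      ← map_zero (fderiv ℝ g c)]
    congr 1
    simpa using (differentiable_id.sub_const c).diffContOnCl (s := ball c |r|).circleAverage
  refine (isBigO_circleAverage hg.isBigO_sub_sub_fderiv_self).congr' ?_ EventuallyEq.rfl
  filter_upwards [hint] with r hr
  have hr' : CircleIntegrable (fun z => g z - g c) c r := hr.sub (circleIntegrable_const _ _ _)
  rw [circleAverage_fun_sub hr' (hlinint r),
    circleAverage_fun_sub hr (circleIntegrable_const _ _ _), circleAverage_const, hlin, sub_zero]

end

noncomputable def meanValueQuotient (g : ℂ → ℝ) (c : ℂ) (r : ℝ) : ℝ :=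
  (circleAverage g c r - g c) / r ^ 2

lemma lam_eq_limsup_meanValueQuotient (g : ℂ → ℝ) (c : ℂ) :
    lam g c = limsup (meanValueQuotient g c) (𝓝[>] 0) := by
  have h2π : (2 * π) ≠ 0 := by positivity
  have hint (r : ℝ) :
      ∫ θ in (0:ℝ)..1, g (c + r * Complex.exp (((2 * π * θ : ℝ) : ℂ) * Complex.I))
        = circleAverage g c r := by
    have := intervalIntegral.integral_comp_mul_left (fun θ => g (circleMap c r θ)) h2π
      (a := 0) (b := 1)
    rw [mul_zero, mul_one] at this
    rw [circleAverage_def, ← this]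
    rfl
  simp only [lam, hint]
  rfl

lemma ContDiffAt.isBoundedUnder_meanValueQuotient {g : ℂ → ℝ} {c : ℂ}
    (hg : ContDiffAt ℝ 2 g c) : IsBoundedUnder (· ≤ ·) (𝓝[>] 0) (meanValueQuotient g c) :=
  (isBigO_div_sq (n := 0) (by simpa using hg.isBigO_circleAverage_sub)).isBoundedUnder_le.mono_le
    (Eventually.of_forall fun _ => le_abs_self _)

lemma IsLocalMax.eventually_meanValueQuotient_le {φ ψ : ℂ → ℝ} {c : ℂ}
    (hmax : IsLocalMax (fun z => φ z - ψ z) c) (hψ : ∀ᶠ z in 𝓝 c, ContinuousAt ψ z) :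
    ∀ᶠ r in 𝓝 (0:ℝ), CircleIntegrable φ c r →
      meanValueQuotient φ c r ≤ meanValueQuotient ψ c r := by
  filter_upwards [eventually_forall_closedBall hmax, eventually_circleIntegrable hψ]
    with r hr hψr hφr
  have h := circleAverage_mono_on_of_le_circle (hφr.sub hψr) fun z hz =>
    hr z (sphere_subset_closedBall hz)
  rw [circleAverage_sub hφr hψr] at h
  exact div_le_div_of_nonneg_right (by linarith) (sq_nonneg r)

section

variable {V : Type*} [NormedAddCommGroup V] [NormedSpace ℂ V] [CompleteSpace V]
  {F : Type*} [NormedAddCommGroup F] [NormedSpace ℝ F] {f : ℂ → V} {c : ℂ}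

lemma AnalyticAt.isBigO_sub_tangent (hf : AnalyticAt ℂ f c) :
    (fun z => f z - (f c + (z - c) • deriv f c)) =O[𝓝 c] fun z => ‖z - c‖ ^ 2 := by
  have hfr : fderiv ℝ f c = (fderiv ℂ f c).restrictScalars ℝ :=
    hf.differentiableAt.fderiv_restrictScalars ℝ
  convert ((hf.contDiffAt (n := 2)).restrict_scalars ℝ).isBigO_sub_sub_fderiv_self
    using 2 with z
  rw [hfr, ContinuousLinearMap.coe_restrictScalars', fderiv_eq_smul_deriv, sub_sub]

lemma AnalyticAt.isBigO_comp_sub_comp_tangent_sub_fderiv {u : V → F} (hf : AnalyticAt ℂ f c)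
    (hu : ContDiffAt ℝ 2 u (f c)) :
    (fun z => u (f z) - u (f c + (z - c) • deriv f c)
        - fderiv ℝ u (f c) (f z - (f c + (z - c) • deriv f c))) =O[𝓝 c]
      fun z => ‖z - c‖ ^ 3 := by
  set ℓ : ℂ → V := fun z => f c + (z - c) • deriv f c
  have hℓ : Differentiable ℂ ℓ := by fun_prop
  have hℓc : ℓ c = f c := by simp [ℓ]
  have hpair : Tendsto (fun z => (ℓ z, f z)) (𝓝 c) (𝓝 (f c, f c)) := by
    have h := (hℓ.continuous.continuousAt.prodMk hf.continuousAt (x := c)).tendsto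
    rwa [hℓc] at h
  have hlin : (fun z => ‖ℓ z - f c‖ + ‖f z - f c‖) =O[𝓝 c] fun z => ‖z - c‖ := by
    have h := (hℓ c).isBigO_sub
    rw [hℓc] at h
    exact h.norm_left.norm_right.add hf.differentiableAt.isBigO_sub.norm_left.norm_right
  exact ((hu.isBigO_sub_sub_fderiv.comp_tendsto hpair).trans
    (hlin.mul hf.isBigO_sub_tangent.norm_left)).congr_right fun z => by ring

lemma AnalyticAt.isBigO_circleAverage_comp_sub_comp_tangent [CompleteSpace F] {u : V → F}
    (hf : AnalyticAt ℂ f c) (hu : ContDiffAt ℝ 2 u (f c)) :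
    (fun r : ℝ => circleAverage (u ∘ f) c r
        - circleAverage (fun z => u (f c + (z - c) • deriv f c)) c r) =O[𝓝 0]
      fun r => r ^ 3 := by
  set ℓ : ℂ → V := fun z => f c + (z - c) • deriv f c
  set L := fderiv ℝ u (f c)
  have hℓ : Differentiable ℂ ℓ := by fun_prop
  have hℓc : ℓ c = f c := by simp [ℓ]
  have hu' : ∀ᶠ y in 𝓝 (f c), ContinuousAt u y :=
    (hu.eventually (by simp)).mono fun _ h => h.continuousAt
  have hfd := Complex.analyticAt_iff_eventually_differentiableAt.1 hf
  have hfc : ∀ᶠ z in 𝓝 c, ContinuousAt f z := hfd.mono fun _ h => h.continuousAt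
  refine (isBigO_circleAverage (hf.isBigO_comp_sub_comp_tangent_sub_fderiv hu)).congr' ?_
    EventuallyEq.rfl
  filter_upwards [eventually_circleIntegrable (eventually_continuousAt_comp hu' hfc),
    eventually_circleIntegrable (eventually_continuousAt_comp (hℓc ▸ hu')
      (Eventually.of_forall fun z => (hℓ z).continuousAt)),
    eventually_circleIntegrable (hfc.mono fun z h => h.sub (hℓ z).continuousAt),
    eventually_circleIntegrable (hfc.mono fun z h => L.continuous.continuousAt.comp
      (h.sub (hℓ z).continuousAt)),
    eventually_forall_closedBall hfd] with r huf huℓ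
    (hfℓint : CircleIntegrable (fun z => f z - ℓ z) c r)
    (hLint : CircleIntegrable (fun z => L (f z - ℓ z)) c r) hfr
  -- the linear term averages to `L ((f - ℓ) c) = 0` by the mean value property
  have hmvp : circleAverage (fun z => f z - ℓ z) c r = 0 := by
    have hd : DifferentiableOn ℂ (fun z => f z - ℓ z) (closedBall c |r|) :=
      fun z hz => ((hfr z hz).sub (hℓ z)).differentiableWithinAt
    rw [(hd.diffContOnCl_ball subset_rfl).circleAverage, hℓc, sub_self]
  have hsplit : circleAverage (fun z => u (f z) - u (ℓ z)) c r
      = circleAverage (u ∘ f) c r - circleAverage (u ∘ ℓ) c r := circleAverage_sub huf huℓ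
  change circleAverage (fun z => u (f z) - u (ℓ z) - L (f z - ℓ z)) c r = _
  rw [circleAverage_fun_sub (f₁ := fun z => u (f z) - u (ℓ z)) (huf.sub huℓ) hLint, hsplit,
    ← Function.comp_def L, L.circleAverage_comp_comm hfℓint, hmvp, map_zero, sub_zero]
  rfl

lemma AnalyticAt.tendsto_meanValueQuotient_comp_sub_tangent {u : V → ℝ}
    (hf : AnalyticAt ℂ f c) (hu : ContDiffAt ℝ 2 u (f c)) :
    Tendsto (fun r => meanValueQuotient (u ∘ f) c r
      - meanValueQuotient (fun z => u (f c + (z - c) • deriv f c)) c r) (𝓝[>] 0) (𝓝 0) := by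
  refine (isBigO_div_sq (n := 1) (hf.isBigO_circleAverage_comp_sub_comp_tangent hu))
    |>.trans_tendsto ?_ |>.congr fun r => ?_
  · exact (continuous_pow 1).tendsto' 0 0 (by simp) |>.mono_left nhdsWithin_le_nhds
  · simp only [meanValueQuotient, Function.comp_apply, sub_self, zero_smul, add_zero]
    ring

lemma AnalyticAt.eventually_meanValueQuotient_comp_lt {u : V → ℝ} (hf : AnalyticAt ℂ f c)
    (hu : ContDiffAt ℝ 2 u (f c)) {a : ℝ}
    (h : lam (fun z => u (f c + (z - c) • deriv f c)) c < a) :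
    ∀ᶠ r in 𝓝[>] 0, meanValueQuotient (u ∘ f) c r < a := by
  set b := lam (fun z => u (f c + (z - c) • deriv f c)) c
  have hℓ : ContDiffAt ℝ 2 (fun z => u (f c + (z - c) • deriv f c)) c :=
    ContDiffAt.comp (g := u) c (by simpa using hu) (by fun_prop)
  have hlt : ∀ᶠ r in 𝓝[>] 0,
      meanValueQuotient (fun z => u (f c + (z - c) • deriv f c)) c r < (a + b) / 2 :=
    eventually_lt_of_limsup_lt (by rw [← lam_eq_limsup_meanValueQuotient]; linarith)
      hℓ.isBoundedUnder_meanValueQuotient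
  filter_upwards [hlt, (hf.tendsto_meanValueQuotient_comp_sub_tangent hu).eventually
    (gt_mem_nhds (half_pos (sub_pos.2 h)))] with r h₁ h₂
  linarith

end

theorem no_local_max_of_strict_discs_general
    (m : ℕ) (S : Set (Fin m → ℂ)) (hS : IsOpen S)
    (w u : (Fin m → ℂ) → ℝ)
    (hdisc : ∀ s ∈ S, ∀ ξ : Fin m → ℂ, ξ ≠ 0 →
      ∃ ε > (0:ℝ), ∃ f : ℂ → (Fin m → ℂ),
        DifferentiableOn ℂ f (ball (0:ℂ) ε) ∧ MapsTo f (ball (0:ℂ) ε) S ∧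
        f 0 = s ∧ deriv f 0 = ξ ∧ 0 < lam (fun z => w (f z)) 0)
    (hu : ContDiffOn ℝ 2 u S)
    -- for every s ∈ S there is a nonzero direction ξ in which the complex Hessian
    -- of u vanishes, i.e. Λ of u along the complex line through s in direction ξ is 0
    (hflat : ∀ s ∈ S, ∃ ξ : Fin m → ℂ, ξ ≠ 0 ∧
      lam (fun z : ℂ => u (s + z • ξ)) 0 = 0) :
    ∀ s ∈ S, ¬ IsLocalMax (fun x => w x - u x) s := by
  intro s hs hmax
  obtain ⟨ξ, hξ, hflat⟩ := hflat s hs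
  obtain ⟨ε, hε, f, hf, hfS, rfl, rfl, hpos⟩ := hdisc s hs ξ hξ
  have hfa : AnalyticAt ℂ f 0 := hf.analyticAt (ball_mem_nhds 0 hε)
  have hufc : ∀ᶠ z in 𝓝 0, ContinuousAt (u ∘ f) z :=
    eventually_of_mem (ball_mem_nhds 0 hε) fun z hz =>
      (hu.continuousOn.continuousAt (hS.mem_nhds (hfS hz))).comp
        (hf.continuousOn.continuousAt (isOpen_ball.mem_nhds hz))
  rw [lam_eq_limsup_meanValueQuotient] at hpos
  obtain ⟨a, b, ha, hfreq⟩ := exists_frequently_mem_Ioc_of_limsup_pos hpos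
  have hlt := hfa.eventually_meanValueQuotient_comp_lt (hu.contDiffAt (hS.mem_nhds hs)) (a := a)
    (by simpa only [sub_zero, hflat] using ha)
  have hle := (hmax.comp_continuous hfa.continuousAt).eventually_meanValueQuotient_le hufc
  have hjunk := eventually_div_sq_notMem_Ioc (-w (f 0)) (b := b) ha
  obtain ⟨r, hr, hlt, hle, hjunk⟩ :=
    (hfreq.and_eventually (hlt.and ((hle.filter_mono nhdsWithin_le_nhds).and hjunk))).exists
  -- where `w ∘ f` is not circle integrable its average is `0` and the quotient `-w (f 0) / r²`
  by_cases hint : CircleIntegrable (fun z => w (f z)) 0 r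
  · exact (hle hint).not_gt (hlt.trans hr.1)
  · rw [meanValueQuotient, circleAverage.integral_undef hint, zero_sub] at hr
    exact hjunk hr

theorem no_local_max_of_strict_discs
    (m : ℕ) (S : Set (Fin m → ℂ)) (hS : IsOpen S)
    (w u : (Fin m → ℂ) → ℝ) (husc : UpperSemicontinuousOn w S)
    (hdisc : ∀ s ∈ S, ∀ ξ : Fin m → ℂ, ξ ≠ 0 →
      ∃ ε > (0:ℝ), ∃ f : ℂ → (Fin m → ℂ),
        DifferentiableOn ℂ f (ball (0:ℂ) ε) ∧ MapsTo f (ball (0:ℂ) ε) S ∧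
        f 0 = s ∧ deriv f 0 = ξ ∧ 0 < lam (fun z => w (f z)) 0)
    (hu : ContDiffOn ℝ 2 u S)
    -- for every s ∈ S there is a nonzero direction ξ in which the complex Hessian
    -- of u vanishes, i.e. Λ of u along the complex line through s in direction ξ is 0
    (hflat : ∀ s ∈ S, ∃ ξ : Fin m → ℂ, ξ ≠ 0 ∧
      lam (fun z : ℂ => u (s + z • ξ)) 0 = 0) :
    ∀ s ∈ S, ¬ IsLocalMax (fun x => w x - u x) s :=
  no_local_max_of_strict_discs_general m S hS w u hdisc hu hflat
end

section
/- Let χ : ℝ → ℝ be continuous with χ(t) = 0 for t ≤ 0, χ(t) > 0 for t > 0, and liminf_{t→∞} χ(t)/t > 0. Let c = a − b > 0. Then lim_{t→∞} ∫_{|y| ≥ 1, y ∈ ℝ^c} exp(−χ(t + t·log|y|²)) dy = 0. -/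
/-!
For large `t` the argument `s = t (1 + 2 log ‖y‖)` is at least `t`, so the growth condition
`χ s ≥ δ s` gives `exp (-χ s) ≤ exp (-δ t) ‖y‖ ^ (-2 δ t)`. Once `2 δ t ≥ c + 1` this is at most
`exp (-δ t) ‖y‖ ^ (-(c + 1))`, which is integrable on `{‖y‖ ≥ 1}` in dimension `c`; hence the
integral is `O(exp (-δ t))`.
-/

open Filter MeasureTheory Set Real Module

lemma exists_pos_eventually_le_of_liminf_pos {α : Type*} {l : Filter α} {f : α → ℝ}
    (h : 0 < l.liminf f) : ∃ δ > 0, ∀ᶠ x in l, δ ≤ f x := by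
  by_contra! H
  rw [liminf_eq] at h
  refine h.not_ge (Real.sSup_nonpos fun δ hδ => ?_)
  by_contra! hpos
  obtain ⟨x, hδx, hx⟩ := (hδ.and_frequently (H δ hpos)).exists
  exact hx.not_ge hδx

lemma rpow_neg_le_two_rpow_mul_one_add_rpow_neg {r p : ℝ} (hr : 1 ≤ r) (hp : 0 ≤ p) :
    r ^ (-p) ≤ 2 ^ p * (1 + r) ^ (-p) := by
  have h : r⁻¹ ≤ 2 * (1 + r)⁻¹ := by
    field_simp
    linarith
  calc r ^ (-p) = r⁻¹ ^ p := by rw [rpow_neg (by positivity), inv_rpow (by positivity)]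
    _ ≤ (2 * (1 + r)⁻¹) ^ p := rpow_le_rpow (by positivity) h hp
    _ = 2 ^ p * (1 + r) ^ (-p) := by
      rw [mul_rpow (by norm_num) (by positivity), rpow_neg (by positivity),
        inv_rpow (by positivity)]

lemma integrableOn_norm_rpow_neg_of_finrank_lt {E : Type*} [NormedAddCommGroup E]
    [NormedSpace ℝ E] [FiniteDimensional ℝ E] [MeasurableSpace E] [BorelSpace E]
    (μ : Measure E) [μ.IsAddHaarMeasure] {p : ℝ} (hp : finrank ℝ E < p) :
    IntegrableOn (fun y : E => ‖y‖ ^ (-p)) {y | 1 ≤ ‖y‖} μ := by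
  have hp₀ : 0 ≤ p := (Nat.cast_nonneg _).trans hp.le
  refine ((integrable_one_add_norm hp).const_mul (2 ^ p)).integrableOn.mono'
    (measurable_norm.pow_const _).aestronglyMeasurable ?_
  refine (ae_restrict_iff' (isClosed_le continuous_const continuous_norm).measurableSet).2
    (Eventually.of_forall fun y hy => ?_)
  rw [norm_of_nonneg (rpow_nonneg (norm_nonneg y) _)]
  exact rpow_neg_le_two_rpow_mul_one_add_rpow_neg hy hp₀

lemma exp_neg_comp_le_of_linear_lower_bound {χ : ℝ → ℝ} {δ T p t r : ℝ}
    (hχ : ∀ s ≥ T, δ * s ≤ χ s) (hT : T ≤ t) (ht : 0 ≤ t) (hp : p ≤ 2 * δ * t) (hr : 1 ≤ r) :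
    exp (-χ (t + t * log (r ^ 2))) ≤ exp (-(δ * t)) * r ^ (-p) := by
  have hlog : log (r ^ 2) = 2 * log r := by rw [log_pow]; push_cast; ring
  have hlog₀ : 0 ≤ log r := log_nonneg hr
  have hs : T ≤ t + t * log (r ^ 2) := by rw [hlog]; nlinarith
  calc exp (-χ (t + t * log (r ^ 2)))
      ≤ exp (-(δ * (t + t * log (r ^ 2)))) := exp_le_exp.2 (neg_le_neg (hχ _ hs))
    _ = exp (-(δ * t)) * r ^ (-(2 * δ * t)) := by
      rw [rpow_def_of_pos (by linarith), ← exp_add, hlog]; ring_nf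
    _ ≤ exp (-(δ * t)) * r ^ (-p) := by gcongr

theorem tail_integral_tendsto_zero_general
    (χ : ℝ → ℝ)
    (hχlin : 0 < atTop.liminf (fun t => χ t / t))
    (c : ℕ) :
    Tendsto (fun t : ℝ =>
        ∫ y in {y : EuclideanSpace ℝ (Fin c) | 1 ≤ ‖y‖},
          Real.exp (-(χ (t + t * Real.log (‖y‖ ^ 2)))))
      atTop (nhds 0) := by
  obtain ⟨δ, hδ, hχδ⟩ := exists_pos_eventually_le_of_liminf_pos hχlin
  obtain ⟨T, hT⟩ := eventually_atTop.1 <| (hχδ.and (eventually_gt_atTop 0)).mono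
    fun s ⟨h, hs⟩ => (le_div_iff₀ hs).1 h
  set S := {y : EuclideanSpace ℝ (Fin c) | 1 ≤ ‖y‖}
  set p : ℝ := c + 1
  have hdecay : Tendsto (fun t => exp (-(δ * t)) * ∫ y in S, ‖y‖ ^ (-p)) atTop (nhds 0) := by
    simpa using ((tendsto_exp_neg_atTop_nhds_zero.comp
      (tendsto_id.const_mul_atTop hδ)).mul_const _)
  refine squeeze_zero' (Eventually.of_forall fun t => integral_nonneg fun y => (exp_pos _).le)
    ?_ hdecay
  filter_upwards [eventually_ge_atTop (max T 0), eventually_ge_atTop (p / (2 * δ))]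
    with t ht htp
  rw [← integral_const_mul]
  refine setIntegral_mono_of_nonneg (fun y _ => (exp_pos _).le)
    (fun y hy => exp_neg_comp_le_of_linear_lower_bound hT
      (le_of_max_le_left ht) (le_of_max_le_right ht) ?_ hy)
    ((integrableOn_norm_rpow_neg_of_finrank_lt volume (by simp [p])).const_mul _)
  rwa [div_le_iff₀ (by positivity), mul_comm] at htp

theorem tail_integral_tendsto_zero
    (χ : ℝ → ℝ) (hχcont : Continuous χ)
    (hχ0 : ∀ t ≤ (0:ℝ), χ t = 0) (hχpos : ∀ t > (0:ℝ), 0 < χ t)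
    (hχlin : 0 < atTop.liminf (fun t => χ t / t))
    (a b : ℕ) (hab : b < a) (c : ℕ) (hc : c = a - b) :
    Tendsto (fun t : ℝ =>
        ∫ y in {y : EuclideanSpace ℝ (Fin c) | 1 ≤ ‖y‖},
          Real.exp (-(χ (t + t * Real.log (‖y‖ ^ 2)))))
      atTop (nhds 0) :=
  tail_integral_tendsto_zero_general χ hχlin c
end
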